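/- Matching count in the even-type shuriken graph: Let N ≥ 4 be an even integer and let S_N^0 be the shuriken graph with tips v_1,…,v_N and inner vertices u_1,…,u_N. Then for every subset T of the set of tips {v_1,…,v_N}, the number of matchings of S_N^0 whose set of covered vertices is exactly {u_1,…,u_N} ∪ T is equal to 2 if |T| is even, and equal to 0 if |T| is odd. -/

import Mathlib

/-- The even-type shuriken graph `S_N^0` on vertices `Sum.inl t` (the tips `v_{t+1}`,
`0 ≤ t ≤ N-1`) and `Sum.inr i` (the inner vertices `u_{i+1}`, `0 ≤ i ≤ N-1`).
Its edges are the inner cycle edges `{u_i, u_{i+1}}` (indices mod `N`) and the blade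
edges `{v_j, u_{j-1}}, {v_j, u_j}` for `2 ≤ j ≤ N` together with `{v_1, u_1}` and
`{v_1, u_N}` (in 0-based terms: tip `t` is adjacent to inner `t` and inner `(t+N-1) % N`). -/
def shuriken0 (N : ℕ) : SimpleGraph (Fin N ⊕ Fin N) :=
  SimpleGraph.fromRel (fun a b =>
    match a, b with
    | Sum.inr i, Sum.inr j => j.1 = (i.1 + 1) % N
    | Sum.inl t, Sum.inr i => i = t ∨ i.1 = (t.1 + N - 1) % N
    | _, _ => False)

/-!
Record, for every inner vertex `u_i` of a matching covering the inner vertices and the tips in `T`,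
whether `u_i` is matched forwards (to `u_{i+1}` or `v_{i+1}`) or backwards, as `d i ∈ ZMod 2`.
The matching is recovered from `d` as the involution pairing each vertex with its partner, and this
pairing is an involution exactly when `d (i + 1) = d i` for `v_{i+1} ∈ T` and `d (i + 1) = d i + 1`
otherwise. Going once around the cycle, such `d` exist iff the number `N - |T|` of missing tips is
even, and then there are two of them, fixed by `d 0`.
-/

namespace Fin

variable {N : ℕ} [NeZero N]

theorem add_one_ne_self (hN : 2 ≤ N) (i : Fin N) : i + 1 ≠ i := by
  rw [Ne, add_eq_left, Fin.ext_iff, Fin.val_one', Nat.mod_eq_of_lt hN]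
  simp

theorem sub_one_ne_add_one (hN : 3 ≤ N) (i : Fin N) : i - 1 ≠ i + 1 := by
  rw [Ne, sub_eq_iff_eq_add, add_assoc, left_eq_add, Fin.ext_iff, Fin.val_add, Fin.val_one',
    Nat.mod_eq_of_lt (by omega : 1 < N), Nat.mod_eq_of_lt (by omega : 2 < N)]
  simp

theorem val_sub_one_eq_mod (hN : 2 ≤ N) (t : Fin N) : (t - 1).val = (t.val + N - 1) % N := by
  simp only [Fin.sub_def, Fin.val_one', Nat.mod_eq_of_lt hN]
  congr 1
  omega

theorem val_add_one_eq_mod (hN : 2 ≤ N) (t : Fin N) : (t + 1).val = (t.val + 1) % N := by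
  rw [Fin.val_add, Fin.val_one', Nat.mod_eq_of_lt hN]

section CyclicRecurrence

open Finset Fin.NatCast

variable {G : Type*} [AddCommGroup G] {b d : Fin N → G}

theorem apply_natCast_eq_add_sum_range (hd : ∀ i, d (i + 1) = d i + b i) (k : ℕ) :
    d k = d 0 + ∑ j ∈ range k, b j := by
  induction k with
  | zero => simp
  | succ k ih => rw [Nat.cast_succ, hd, ih, sum_range_succ, add_assoc]

theorem sum_eq_zero_of_forall_apply_add_one (hd : ∀ i, d (i + 1) = d i + b i) :
    ∑ i, b i = 0 := by
  have h := apply_natCast_eq_add_sum_range hd N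
  rw [Fin.natCast_self, left_eq_add, ← Fin.sum_univ_eq_sum_range] at h
  simpa using h

theorem sum_range_val_add_one (hb : ∑ i, b i = 0) (i : Fin N) :
    ∑ j ∈ range (i + 1 : Fin N).val, b j = ∑ j ∈ range i.val, b j + b i := by
  nth_rw 3 [← Fin.cast_val_eq_self i]
  rw [← sum_range_succ (fun j : ℕ => b j)]
  rcases (Nat.succ_le_of_lt i.isLt).lt_or_eq with hlt | heq
  · rw [Fin.val_add_one_of_lt' hlt]
  · have hi : i + 1 = 0 := by rw [← Fin.cast_val_eq_self i, ← Nat.cast_succ, heq, Fin.natCast_self]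
    rw [hi, Fin.val_zero, sum_range_zero, show i.val + 1 = N from heq,
      ← Fin.sum_univ_eq_sum_range (fun j : ℕ => b j)]
    simpa using hb.symm

def cyclicRecurrenceEquiv (hb : ∑ i, b i = 0) :
    {d : Fin N → G // ∀ i, d (i + 1) = d i + b i} ≃ G where
  toFun d := d.1 0
  invFun c := ⟨fun i => c + ∑ j ∈ range i.val, b j, fun i => by
    dsimp only
    rw [sum_range_val_add_one hb, add_assoc]⟩
  left_inv d := by
    ext i
    simpa using (apply_natCast_eq_add_sum_range d.2 i.val).symm
  right_inv c := by simp

theorem card_cyclicRecurrence [DecidableEq G] (b : Fin N → G) :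
    Nat.card {d : Fin N → G // ∀ i, d (i + 1) = d i + b i} =
      if ∑ i, b i = 0 then Nat.card G else 0 := by
  split_ifs with hb
  · exact Nat.card_congr (cyclicRecurrenceEquiv hb)
  · have : IsEmpty {d : Fin N → G // ∀ i, d (i + 1) = d i + b i} :=
      ⟨fun d => hb (sum_eq_zero_of_forall_apply_add_one d.2)⟩
    exact Nat.card_of_isEmpty

end CyclicRecurrence

end Fin

theorem ZMod.eq_add_ite_zero_one_iff {x y : ZMod 2} {P : Prop} [Decidable P] :
    (y = x + if P then 0 else 1) ↔ (y = 1 ↔ (x = 1 ↔ P)) := by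
  by_cases hP : P <;> simp only [hP, if_true, if_false, iff_true, iff_false] <;> revert x y <;> decide

namespace SimpleGraph.Subgraph

variable {V : Type*}

def ofInvolution (G : SimpleGraph V) (S : Set V) (p : V → V) (hS : ∀ x ∈ S, p x ∈ S)
    (hp : ∀ x ∈ S, p (p x) = x) (hadj : ∀ x ∈ S, G.Adj x (p x)) : G.Subgraph where
  verts := S
  Adj x y := x ∈ S ∧ p x = y
  adj_sub := by
    rintro x _ ⟨hx, rfl⟩
    exact hadj x hx
  edge_vert h := h.1
  symm := ⟨by
    rintro x _ ⟨hx, rfl⟩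
    exact ⟨hS x hx, hp x hx⟩⟩

variable {G : SimpleGraph V} {S : Set V} {p : V → V} {hS : ∀ x ∈ S, p x ∈ S}
  {hp : ∀ x ∈ S, p (p x) = x} {hadj : ∀ x ∈ S, G.Adj x (p x)}

theorem ofInvolution_adj {x y : V} : (ofInvolution G S p hS hp hadj).Adj x y ↔ x ∈ S ∧ p x = y :=
  Iff.rfl

theorem isMatching_ofInvolution : (ofInvolution G S p hS hp hadj).IsMatching :=
  fun x hx => ⟨p x, ⟨hx, rfl⟩, fun _ h => h.2.symm⟩

variable {M : G.Subgraph}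

theorem IsMatching.apply_apply_eq_self (hM : M.IsMatching) (h : ∀ x ∈ M.verts, M.Adj x (p x))
    {x : V} (hx : x ∈ M.verts) : p (p x) = x :=
  hM.eq_of_adj_left (h _ (M.edge_vert (M.adj_symm (h x hx)))) (M.adj_symm (h x hx))

theorem IsMatching.eq_ofInvolution (hM : M.IsMatching) (hV : M.verts = S)
    (h : ∀ x ∈ S, M.Adj x (p x)) : M = ofInvolution G S p hS hp hadj := by
  ext x y
  · exact Set.ext_iff.1 hV x
  · refine ⟨fun hxy => ?_, fun ⟨hx, hxy⟩ => hxy ▸ h x hx⟩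
    have hx : x ∈ S := hV ▸ M.edge_vert hxy
    exact ⟨hx, hM.eq_of_adj_left (h x hx) hxy⟩

end SimpleGraph.Subgraph

namespace Shuriken0

open Sum SimpleGraph.Subgraph

variable {N : ℕ}

theorem not_adj_inl_inl {s t : Fin N} : ¬ (shuriken0 N).Adj (inl s) (inl t) := by
  simp [shuriken0]

def innersAndTips (T : Finset (Fin N)) : Set (Fin N ⊕ Fin N) :=
  Set.range inr ∪ inl '' (T : Set (Fin N))

@[simp]
theorem inr_mem_innersAndTips {T : Finset (Fin N)} {i : Fin N} : inr i ∈ innersAndTips T :=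
  Or.inl ⟨i, rfl⟩

@[simp]
theorem inl_mem_innersAndTips {T : Finset (Fin N)} {t : Fin N} :
    inl t ∈ innersAndTips T ↔ t ∈ T := by
  simp [innersAndTips]

theorem mem_of_adj_inl {T : Finset (Fin N)} {M : (shuriken0 N).Subgraph}
    (hV : M.verts = innersAndTips T) {x : Fin N ⊕ Fin N} {t : Fin N} (h : M.Adj x (inl t)) :
    t ∈ T := by
  simpa [hV] using M.edge_vert (M.adj_symm h)

variable [NeZero N]

theorem adj_inr_inr (hN : 2 ≤ N) {i j : Fin N} :
    (shuriken0 N).Adj (inr i) (inr j) ↔ j = i + 1 ∨ j = i - 1 := by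
  have hsucc (i j : Fin N) : j.val = (i.val + 1) % N ↔ j = i + 1 := by
    rw [← Fin.val_add_one_eq_mod hN, Fin.val_inj]
  simp only [shuriken0, SimpleGraph.fromRel_adj, hsucc, ne_eq, inr.injEq, eq_sub_iff_add_eq]
  constructor
  · exact fun h => h.2.imp id Eq.symm
  · rintro (rfl | rfl)
    · exact ⟨(Fin.add_one_ne_self hN i).symm, Or.inl rfl⟩
    · exact ⟨Fin.add_one_ne_self hN j, Or.inr rfl⟩

theorem adj_inl_inr (hN : 2 ≤ N) {t i : Fin N} :
    (shuriken0 N).Adj (inl t) (inr i) ↔ i = t ∨ i = t - 1 := by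
  simp [shuriken0, ← Fin.val_sub_one_eq_mod hN, Fin.val_inj]

theorem adj_inr_inl (hN : 2 ≤ N) {i t : Fin N} :
    (shuriken0 N).Adj (inr i) (inl t) ↔ t = i ∨ t = i + 1 := by
  rw [SimpleGraph.adj_comm, adj_inl_inr hN, eq_sub_iff_add_eq, eq_comm, @eq_comm _ (i + 1)]

/-- `d i = 1` records that the inner vertex `i` is matched forwards, to the inner vertex or tip
`i + 1`; tip `t` sits between the inner vertices `t - 1` and `t`. -/
def partner (T : Finset (Fin N)) (d : Fin N → ZMod 2) : Fin N ⊕ Fin N → Fin N ⊕ Fin N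
  | inr i => if d i = 1 then (if i + 1 ∈ T then inl (i + 1) else inr (i + 1))
      else if i ∈ T then inl i else inr (i - 1)
  | inl t => if d (t - 1) = 1 then inr (t - 1) else inr t

section Directions

variable {T : Finset (Fin N)} {d : Fin N → ZMod 2}

theorem partner_mem {x : Fin N ⊕ Fin N} (hx : x ∈ innersAndTips T) :
    partner T d x ∈ innersAndTips T := by
  rcases x with t | i <;> simp only [partner] <;> split_ifs <;> simp_all

theorem adj_partner (hN : 2 ≤ N) (x : Fin N ⊕ Fin N) : (shuriken0 N).Adj x (partner T d x) := by
  rcases x with t | i <;> simp only [partner] <;> split_ifs <;>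
    simp [adj_inl_inr hN, adj_inr_inr hN, adj_inr_inl hN]

theorem forall_partner_partner_iff (hN : 3 ≤ N) :
    (∀ x ∈ innersAndTips T, partner T d (partner T d x) = x) ↔
      ∀ i, d (i + 1) = d i + if i + 1 ∈ T then 0 else 1 := by
  simp only [ZMod.eq_add_ite_zero_one_iff]
  constructor
  · intro h i
    have hne₁ := Fin.add_one_ne_self (by omega) i
    have hne₂ := Fin.sub_one_ne_add_one hN i
    have hne₃ : i + 1 + 1 ≠ i := by simpa using (Fin.sub_one_ne_add_one hN (i + 1)).symm
    have h₁ := h (inr i) inr_mem_innersAndTips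
    have h₂ := h (inr (i + 1)) inr_mem_innersAndTips
    have h₃ : i + 1 ∈ T → _ := fun hT => h (inl (i + 1)) (inl_mem_innersAndTips.2 hT)
    clear h
    by_cases hi : d i = 1 <;> by_cases hi' : d (i + 1) = 1 <;> by_cases hT₀ : i ∈ T <;>
      by_cases hT₁ : i + 1 ∈ T <;> by_cases hT₂ : i + 1 + 1 ∈ T <;> simp_all [partner]
  · rintro hd (t | i) hx
    · have ht : t ∈ T := by simpa using hx
      have h := hd (t - 1)
      rw [sub_add_cancel] at h
      by_cases h1 : d (t - 1) = 1 <;> simp_all [partner]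
    · have h₁ := hd i
      have h₀ := hd (i - 1)
      rw [sub_add_cancel] at h₀
      by_cases hi : d i = 1 <;> by_cases hT : i ∈ T <;> by_cases hT' : i + 1 ∈ T <;>
        simp_all [partner]

open Classical in
noncomputable def directions (M : (shuriken0 N).Subgraph) (i : Fin N) : ZMod 2 :=
  if M.Adj (inr i) (inr (i + 1)) ∨ M.Adj (inr i) (inl (i + 1)) then 1 else 0

theorem directions_eq_one_iff {M : (shuriken0 N).Subgraph} {i : Fin N} :
    directions M i = 1 ↔ M.Adj (inr i) (inr (i + 1)) ∨ M.Adj (inr i) (inl (i + 1)) := by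
  unfold directions
  split_ifs with h <;> simp [h]

section Matching

variable {M : (shuriken0 N).Subgraph}

theorem adj_inl_of_mem (hN : 2 ≤ N) (hM : M.IsMatching) (hV : M.verts = innersAndTips T)
    {t : Fin N} (ht : t ∈ T) : M.Adj (inl t) (inr t) ∨ M.Adj (inl t) (inr (t - 1)) := by
  obtain ⟨w, hw, -⟩ := hM (hV ▸ inl_mem_innersAndTips.2 ht)
  rcases w with s | i
  · exact (not_adj_inl_inl (M.adj_sub hw)).elim
  · rcases (adj_inl_inr hN).1 (M.adj_sub hw) with rfl | rfl
    exacts [Or.inl hw, Or.inr hw]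

theorem not_adj_inr_sub_one_of_mem (hN : 2 ≤ N) (hM : M.IsMatching)
    (hV : M.verts = innersAndTips T) {t : Fin N} (ht : t ∈ T) :
    ¬ M.Adj (inr (t - 1)) (inr t) := by
  intro h
  rcases adj_inl_of_mem hN hM hV ht with h' | h'
  · exact inl_ne_inr (hM.eq_of_adj_left (M.adj_symm h') (M.adj_symm h))
  · exact inl_ne_inr (hM.eq_of_adj_left (M.adj_symm h') h)

theorem adj_partner_directions_inl (hN : 2 ≤ N) (hM : M.IsMatching)
    (hV : M.verts = innersAndTips T) {t : Fin N} (ht : t ∈ T) :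
    M.Adj (inl t) (partner T (directions M) (inl t)) := by
  simp only [partner]
  by_cases hR : directions M (t - 1) = 1
  · rw [if_pos hR]
    rw [directions_eq_one_iff, sub_add_cancel] at hR
    exact M.adj_symm (hR.resolve_left (not_adj_inr_sub_one_of_mem hN hM hV ht))
  · rw [if_neg hR]
    rw [directions_eq_one_iff, sub_add_cancel] at hR
    exact (adj_inl_of_mem hN hM hV ht).resolve_right fun h => hR (Or.inr (M.adj_symm h))

theorem adj_partner_directions_inr (hN : 2 ≤ N) (hM : M.IsMatching)
    (hV : M.verts = innersAndTips T) (i : Fin N) :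
    M.Adj (inr i) (partner T (directions M) (inr i)) := by
  simp only [partner]
  by_cases hR : directions M i = 1
  · rw [if_pos hR]
    rw [directions_eq_one_iff] at hR
    split_ifs with hT
    · exact hR.resolve_left (by simpa using not_adj_inr_sub_one_of_mem hN hM hV hT)
    · exact hR.resolve_right fun h => hT (mem_of_adj_inl hV h)
  · rw [if_neg hR]
    rw [directions_eq_one_iff] at hR
    have hback : M.Adj (inr i) (inl i) ∨ M.Adj (inr i) (inr (i - 1)) := by
      obtain ⟨w, hw, -⟩ := hM (hV ▸ inr_mem_innersAndTips : inr i ∈ M.verts)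
      rcases w with t | j
      · rcases (adj_inr_inl hN).1 (M.adj_sub hw) with rfl | rfl
        exacts [Or.inl hw, (hR (Or.inr hw)).elim]
      · rcases (adj_inr_inr hN).1 (M.adj_sub hw) with rfl | rfl
        exacts [(hR (Or.inl hw)).elim, Or.inr hw]
    split_ifs with hT
    · exact hback.resolve_right fun h => not_adj_inr_sub_one_of_mem hN hM hV hT (M.adj_symm h)
    · exact hback.resolve_left fun h => hT (mem_of_adj_inl hV h)

theorem adj_partner_directions (hN : 2 ≤ N) (hM : M.IsMatching) (hV : M.verts = innersAndTips T)
    {x : Fin N ⊕ Fin N} (hx : x ∈ innersAndTips T) : M.Adj x (partner T (directions M) x) := by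
  rcases x with t | i
  · exact adj_partner_directions_inl hN hM hV (by simpa using hx)
  · exact adj_partner_directions_inr hN hM hV i

theorem directions_add_one (hN : 3 ≤ N) (hM : M.IsMatching) (hV : M.verts = innersAndTips T)
    (i : Fin N) : directions M (i + 1) = directions M i + if i + 1 ∈ T then 0 else 1 := by
  refine (forall_partner_partner_iff hN).1 (fun x hx => ?_) i
  refine hM.apply_apply_eq_self (fun y hy => ?_) (hV ▸ hx)
  exact adj_partner_directions (by omega) hM hV (hV ▸ hy)

end Matching

theorem directions_ofInvolution (hN : 3 ≤ N)
    {hS : ∀ x ∈ innersAndTips T, partner T d x ∈ innersAndTips T}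
    {hp : ∀ x ∈ innersAndTips T, partner T d (partner T d x) = x}
    {hadj : ∀ x ∈ innersAndTips T, (shuriken0 N).Adj x (partner T d x)} :
    directions (ofInvolution (shuriken0 N) (innersAndTips T) (partner T d) hS hp hadj) = d := by
  funext i
  have hne₁ := Fin.add_one_ne_self (by omega) i
  have hne₂ := Fin.sub_one_ne_add_one hN i
  have key : ∀ x y : ZMod 2, (x = 1 ↔ y = 1) → x = y := by decide
  refine key _ _ ?_
  rw [directions_eq_one_iff, ofInvolution_adj, ofInvolution_adj]
  by_cases hi : d i = 1 <;> by_cases hT₀ : i ∈ T <;> by_cases hT₁ : i + 1 ∈ T <;>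
    simp [partner, hi, hT₀, hT₁, hne₁.symm, hne₂]

end Directions

noncomputable def matchingEquiv (hN : 3 ≤ N) (T : Finset (Fin N)) :
    {M : (shuriken0 N).Subgraph // M.IsMatching ∧ M.verts = innersAndTips T} ≃
      {d : Fin N → ZMod 2 // ∀ i, d (i + 1) = d i + if i + 1 ∈ T then 0 else 1} where
  toFun M := ⟨directions M.1, directions_add_one hN M.2.1 M.2.2⟩
  invFun d := ⟨ofInvolution _ _ (partner T d.1) (fun _ => partner_mem)
    ((forall_partner_partner_iff hN).2 d.2) (fun x _ => adj_partner (by omega) x),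
    isMatching_ofInvolution, rfl⟩
  left_inv M := Subtype.ext <| by
    dsimp only
    exact (M.2.1.eq_ofInvolution M.2.2 fun _ hx =>
      adj_partner_directions (by omega) M.2.1 M.2.2 hx).symm
  right_inv d := Subtype.ext <| by
    dsimp only
    exact directions_ofInvolution hN

end Shuriken0

open Finset in
/-- **Matching count in the even-type shuriken graph**: for every even `N ≥ 4` and every
subset `T` of the tips, the number of matchings of `S_N^0` whose set of covered vertices
is exactly (all the inner vertices) `∪ T` equals `2` if `|T|` is even and `0` if `|T|`
is odd.  Matchings are represented as subgraphs `M` with `M.IsMatching`, whose vertex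
set `M.verts` is the set of covered vertices. -/
theorem shuriken0_matching_count (N : ℕ) (hN : 4 ≤ N) (hNeven : Even N)
    (T : Finset (Fin N)) :
    Nat.card { M : (shuriken0 N).Subgraph // M.IsMatching ∧
        M.verts = Set.range (Sum.inr : Fin N → Fin N ⊕ Fin N) ∪
          (Sum.inl : Fin N → Fin N ⊕ Fin N) '' (T : Set (Fin N)) } =
      if Even T.card then 2 else 0 := by
  have : NeZero N := ⟨by omega⟩
  have hsum : (∑ i : Fin N, if i + 1 ∈ T then (0 : ZMod 2) else 1) = ((N - #T : ℕ) : ZMod 2) := by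
    rw [Fintype.sum_equiv (Equiv.addRight 1) (fun i => if i + 1 ∈ T then (0 : ZMod 2) else 1)
      (fun g => if g ∈ T then 0 else 1) fun _ => rfl]
    simp [sum_ite, filter_notMem_eq_sdiff, card_sdiff]
  refine (Nat.card_congr (Shuriken0.matchingEquiv (by omega) T)).trans ?_
  have hT : #T ≤ N := by simpa using T.card_le_univ
  simp only [Fin.card_cyclicRecurrence, Nat.card_zmod, hsum, ZMod.natCast_eq_zero_iff_even,
    Nat.even_sub hT, hNeven, true_iff]
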